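/- arXiv:1111.5993 — 3 statements merged into one kernel-verified Lean document; each statement's English description precedes it below -/
import Mathlib

section
/- The full latent-variable household model with one age category is identifiable: if (p_A, q_A), (p_B, q_B) ∈ (0,1]² induce the same distribution of the respondent's reported contact count W for every household size n ≥ 2 (where W | R=1 is distributed as the number of successes among H at-home members each contacted with probability q, H ~ Binomial(n−1, p), and W = 0 when R = 0, R ~ Bernoulli(p)), then p_A = p_B and q_A = q_B. -/
/-!
A report of `n` contacts in a household of size `n + 1` happens only when everybody is at home
and every other member is contacted, so it has probability `p ^ (n + 1) * q ^ n`. Sizes 2 and 3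
thus reveal `p ^ 2 * q` and `p ^ 3 * q ^ 2`, from which `p = (p ^ 2 * q) ^ 2 / (p ^ 3 * q ^ 2)`
and then `q` are recovered.
-/

open Finset

/-- Marginal pmf of the respondent's reported contact count `W = w` in a household
of size `n` (so `n - 1` other members) in the single-age-category latent variable
model: the respondent is at home with probability `p` (else `W = 0`), the number
`H` of other members at home is `Binomial (n-1, p)`, and given `H = h` the count
`W` of contacted members is `Binomial (h, q)`. -/
noncomputable def reportPMF (p q : ℝ) (n w : ℕ) : ℝ :=
  (if w = 0 then 1 - p else 0) +
    p * ∑ h ∈ Finset.range n, (h.choose w : ℝ) * q ^ w * (1 - q) ^ (h - w) *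
      ((n - 1).choose h : ℝ) * p ^ h * (1 - p) ^ (n - 1 - h)

theorem reportPMF_succ_self (p q : ℝ) {n : ℕ} (hn : n ≠ 0) :
    reportPMF p q (n + 1) n = p ^ (n + 1) * q ^ n := by
  have hlow : ∀ h ∈ range n, (h.choose n : ℝ) = 0 := fun h hh ↦ by
    rw [Nat.choose_eq_zero_of_lt (mem_range.mp hh), Nat.cast_zero]
  rw [reportPMF, if_neg hn, sum_range_succ, sum_eq_zero fun h hh ↦ by rw [hlow h hh]; ring]
  simp only [Nat.choose_self, Nat.add_sub_cancel, Nat.sub_self]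
  ring

theorem eq_and_eq_of_sq_mul_eq_of_pow_three_mul_sq_eq {K : Type*} [Field K] {a b c d : K}
    (ha : a ≠ 0) (hb : b ≠ 0) (h₁ : a ^ 2 * b = c ^ 2 * d) (h₂ : a ^ 3 * b ^ 2 = c ^ 3 * d ^ 2) :
    a = c ∧ b = d := by
  have hac : a = c := by
    refine mul_right_cancel₀ (by positivity : a ^ 3 * b ^ 2 ≠ 0) ?_
    calc a * (a ^ 3 * b ^ 2) = (a ^ 2 * b) ^ 2 := by ring
      _ = (c ^ 2 * d) ^ 2 := by rw [h₁]
      _ = c * (c ^ 3 * d ^ 2) := by ring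
      _ = c * (a ^ 3 * b ^ 2) := by rw [h₂]
  subst hac
  exact ⟨rfl, mul_left_cancel₀ (pow_ne_zero 2 ha) h₁⟩

theorem single_category_identifiable_general (pA qA pB qB : ℝ)
    (hpA : pA ∈ Set.Ioc (0 : ℝ) 1) (hqA : qA ∈ Set.Ioc (0 : ℝ) 1)
    (h : ∀ n : ℕ, 2 ≤ n → ∀ w : ℕ, reportPMF pA qA n w = reportPMF pB qB n w) :
    pA = pB ∧ qA = qB := by
  have hsize2 := h 2 le_rfl 1
  have hsize3 := h 3 (by norm_num) 2
  simp only [reportPMF_succ_self _ _ one_ne_zero, reportPMF_succ_self _ _ two_ne_zero,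
    pow_one] at hsize2 hsize3
  exact eq_and_eq_of_sq_mul_eq_of_pow_three_mul_sq_eq hpA.1.ne' hqA.1.ne' hsize2 hsize3

/-- Identifiability of the single-age-category latent-variable household model:
if two parameter pairs in `(0,1]²` induce the same distribution of the
respondent's report for every household size `n ≥ 2`, they are equal. -/
theorem single_category_identifiable (pA qA pB qB : ℝ)
    (hpA : pA ∈ Set.Ioc (0 : ℝ) 1) (hqA : qA ∈ Set.Ioc (0 : ℝ) 1)
    (hpB : pB ∈ Set.Ioc (0 : ℝ) 1) (hqB : qB ∈ Set.Ioc (0 : ℝ) 1)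
    (h : ∀ n : ℕ, 2 ≤ n → ∀ w : ℕ, reportPMF pA qA n w = reportPMF pB qB n w) :
    pA = pB ∧ qA = qB :=
  single_category_identifiable_general pA qA pB qB hpA hqA h
end

section
/- Identifiability of the two-age-category latent variable model: suppose for parameters (p_1, p_2, q_{11}, q_{22}, q_{12}) ∈ (0,1]^5 the induced distributions of respondent reports agree with those of (p_1', p_2', q_{11}', q_{22}', q_{12}') for the following household types: two members both age 1; three members all age 1; two members both age 2; three members all age 2; and two members of ages 1 and 2 (respondent age 1). Then the two parameter vectors are equal. -/
open Finset

/-- Pmf of the respondent's reported contact count for a household consisting of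
the respondent (at home w.p. `pr`) and `n` other members of a single age
category, each at home independently w.p. `ps` and, given both at home,
contacted independently w.p. `q`: `W = 0` if the respondent is away; otherwise
`W | H = h ~ Binomial (h, q)` with `H ~ Binomial (n, ps)`. -/
noncomputable def repPMF (pr ps q : ℝ) (n w : ℕ) : ℝ :=
  (if w = 0 then 1 - pr else 0) +
    pr * ∑ h ∈ Finset.range (n + 1), (h.choose w : ℝ) * q ^ w * (1 - q) ^ (h - w) *
      ((n.choose h : ℝ) * ps ^ h * (1 - ps) ^ (n - h))

/-! Only the top report `W = n` (every other member contacted) is needed; its probability is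
`pr (ps q)ⁿ`. The one- and two-member households of one category give `p·(pq)` and `p·(pq)²`,
whose ratio is `pq`, and then `p` and `q` follow; the mixed household then gives `p₁ p₂ q₁₂`. -/

lemma repPMF_self {n : ℕ} (hn : n ≠ 0) (pr ps q : ℝ) :
    repPMF pr ps q n n = pr * (ps * q) ^ n := by
  have hlow : ∀ h ∈ range n, (h.choose n : ℝ) * q ^ n * (1 - q) ^ (h - n) *
      ((n.choose h : ℝ) * ps ^ h * (1 - ps) ^ (n - h)) = 0 := fun h hh => by
    rw [Nat.choose_eq_zero_of_lt (mem_range.mp hh)]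
    simp
  rw [repPMF, if_neg hn, sum_range_succ, sum_eq_zero hlow]
  simp only [Nat.choose_self, Nat.sub_self, pow_zero]
  ring

lemma eq_and_eq_of_mul_eq_of_mul_sq_eq {K : Type*} [Field K] {a x a' x' : K}
    (ha : a ≠ 0) (hx : x ≠ 0) (h1 : a * x = a' * x') (h2 : a * x ^ 2 = a' * x' ^ 2) :
    a = a' ∧ x = x' := by
  have hx' : x = x' := by
    refine mul_left_cancel₀ (mul_ne_zero ha hx) ?_
    linear_combination h2 - x' * h1
  subst hx'
  exact ⟨mul_right_cancel₀ hx h1, rfl⟩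

lemma single_category_identifiable_s13 {p q p' q' : ℝ} (hp : p ≠ 0) (hq : q ≠ 0)
    (h2 : ∀ w, repPMF p p q 1 w = repPMF p' p' q' 1 w)
    (h3 : ∀ w, repPMF p p q 2 w = repPMF p' p' q' 2 w) :
    p = p' ∧ q = q' := by
  have e2 := h2 1
  have e3 := h3 2
  simp only [repPMF_self one_ne_zero, repPMF_self two_ne_zero, pow_one] at e2 e3
  obtain ⟨rfl, hpq⟩ := eq_and_eq_of_mul_eq_of_mul_sq_eq hp (mul_ne_zero hp hq) e2 e3
  exact ⟨rfl, mul_left_cancel₀ hp hpq⟩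

theorem two_category_identifiable_general
    (p1 p2 q11 q22 q12 p1' p2' q11' q22' q12' : ℝ)
    (hp1 : p1 ∈ Set.Ioc (0 : ℝ) 1) (hp2 : p2 ∈ Set.Ioc (0 : ℝ) 1)
    (hq11 : q11 ∈ Set.Ioc (0 : ℝ) 1) (hq22 : q22 ∈ Set.Ioc (0 : ℝ) 1)
    (h2a : ∀ w, repPMF p1 p1 q11 1 w = repPMF p1' p1' q11' 1 w)
    (h3a : ∀ w, repPMF p1 p1 q11 2 w = repPMF p1' p1' q11' 2 w)
    (h2b : ∀ w, repPMF p2 p2 q22 1 w = repPMF p2' p2' q22' 1 w)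
    (h3b : ∀ w, repPMF p2 p2 q22 2 w = repPMF p2' p2' q22' 2 w)
    (hmix : ∀ w, repPMF p1 p2 q12 1 w = repPMF p1' p2' q12' 1 w) :
    p1 = p1' ∧ p2 = p2' ∧ q11 = q11' ∧ q22 = q22' ∧ q12 = q12' := by
  obtain ⟨rfl, rfl⟩ := single_category_identifiable_s13 hp1.1.ne' hq11.1.ne' h2a h3a
  obtain ⟨rfl, rfl⟩ := single_category_identifiable_s13 hp2.1.ne' hq22.1.ne' h2b h3b
  have hmix1 := hmix 1
  simp only [repPMF_self one_ne_zero, pow_one, ← mul_assoc] at hmix1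
  exact ⟨rfl, rfl, rfl, rfl, mul_left_cancel₀ (mul_ne_zero hp1.1.ne' hp2.1.ne') hmix1⟩

/-- Identifiability of the two-age-category latent variable model: agreement of
the report distributions for households of two and three members of age 1, two
and three members of age 2, and a mixed two-member household (respondent of
age 1, member of age 2) forces the parameter vectors to coincide. -/
theorem two_category_identifiable
    (p1 p2 q11 q22 q12 p1' p2' q11' q22' q12' : ℝ)
    (hp1 : p1 ∈ Set.Ioc (0 : ℝ) 1) (hp2 : p2 ∈ Set.Ioc (0 : ℝ) 1)
    (hq11 : q11 ∈ Set.Ioc (0 : ℝ) 1) (hq22 : q22 ∈ Set.Ioc (0 : ℝ) 1)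
    (hq12 : q12 ∈ Set.Ioc (0 : ℝ) 1)
    (hp1' : p1' ∈ Set.Ioc (0 : ℝ) 1) (hp2' : p2' ∈ Set.Ioc (0 : ℝ) 1)
    (hq11' : q11' ∈ Set.Ioc (0 : ℝ) 1) (hq22' : q22' ∈ Set.Ioc (0 : ℝ) 1)
    (hq12' : q12' ∈ Set.Ioc (0 : ℝ) 1)
    (h2a : ∀ w, repPMF p1 p1 q11 1 w = repPMF p1' p1' q11' 1 w)
    (h3a : ∀ w, repPMF p1 p1 q11 2 w = repPMF p1' p1' q11' 2 w)
    (h2b : ∀ w, repPMF p2 p2 q22 1 w = repPMF p2' p2' q22' 1 w)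
    (h3b : ∀ w, repPMF p2 p2 q22 2 w = repPMF p2' p2' q22' 2 w)
    (hmix : ∀ w, repPMF p1 p2 q12 1 w = repPMF p1' p2' q12' 1 w) :
    p1 = p1' ∧ p2 = p2' ∧ q11 = q11' ∧ q22 = q22' ∧ q12 = q12' :=
  two_category_identifiable_general p1 p2 q11 q22 q12 p1' p2' q11' q22' q12' hp1 hp2 hq11 hq22 h2a
    h3a h2b h3b hmix
end

section
/- Suppose (p, q) and (p', q') in (0,1]×(0,1] satisfy 1 − p + p(1−pq)^n = 1 − p' + p'(1−p'q')^n for all n ≥ 1. Then p = p' and q = q'. -/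
open Filter Topology

lemma tendsto_one_sub_add_mul_pow (p : ℝ) {r : ℝ} (hr : |r| < 1) :
    Tendsto (fun n : ℕ => 1 - p + p * r ^ n) atTop (𝓝 (1 - p)) := by
  simpa using tendsto_const_nhds.add ((tendsto_pow_atTop_nhds_zero_of_abs_lt_one hr).const_mul p)

lemma abs_one_sub_mul_lt_one {p q : ℝ} (hp : p ∈ Set.Ioc (0 : ℝ) 1)
    (hq : q ∈ Set.Ioc (0 : ℝ) 1) : |1 - p * q| < 1 := by
  have hpq_pos : 0 < p * q := mul_pos hp.1 hq.1
  have hpq_le : p * q ≤ 1 := mul_le_one₀ hp.2 hq.1.le hq.2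
  rw [abs_lt]
  constructor <;> linarith

/-- Identifiability of the homogeneous model from zero-report probabilities: if
`(p, q)` and `(p', q')` in `(0,1]²` give the same probability
`1 - p + p (1 - pq)^n` of a zero report for every household size `n ≥ 1`, then
the parameters coincide. -/
theorem zero_report_identifiable (p q p' q' : ℝ)
    (hp : p ∈ Set.Ioc (0 : ℝ) 1) (hq : q ∈ Set.Ioc (0 : ℝ) 1)
    (hp' : p' ∈ Set.Ioc (0 : ℝ) 1) (hq' : q' ∈ Set.Ioc (0 : ℝ) 1)
    (h : ∀ n : ℕ, 1 ≤ n →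
      1 - p + p * (1 - p * q) ^ n = 1 - p' + p' * (1 - p' * q') ^ n) :
    p = p' ∧ q = q' := by
  have h_lim : 1 - p = 1 - p' :=
    tendsto_nhds_unique_of_eventuallyEq
      (tendsto_one_sub_add_mul_pow p (abs_one_sub_mul_lt_one hp hq))
      (tendsto_one_sub_add_mul_pow p' (abs_one_sub_mul_lt_one hp' hq'))
      (eventually_atTop.2 ⟨1, h⟩)
  obtain rfl : p = p' := sub_right_injective h_lim
  have hp0 : p ≠ 0 := hp.1.ne'
  have h_one := h 1 le_rfl
  rw [pow_one, pow_one, add_right_inj, mul_right_inj' hp0, sub_right_inj,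
    mul_right_inj' hp0] at h_one
  exact ⟨rfl, h_one⟩
end
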